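/- For every μ ∈ 𝐌 and every p ∈ [0,1], one has L_μ(p) ≤ Λ_μ(p); moreover L_μ(p) = Λ_μ(p) holds if and only if at least one of the following is true: there exists x ∈ ℝ₊ with p = F_μ(x), or Q_μ(p) = 0, or p = 1. -/

import Mathlib

open MeasureTheory Filter Topology

noncomputable section

/-- The mean of a measure on `ℝ`. -/
def mMean (μ : Measure ℝ) : ℝ := ∫ x, x ∂μ

/-- `μ ∈ 𝐌`: a Borel probability measure on `ℝ₊` (modelled as a measure on `ℝ` giving no
mass to negative numbers) with finite nonzero mean. -/
def MemM (μ : Measure ℝ) : Prop :=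
  IsProbabilityMeasure μ ∧ μ {x | x < 0} = 0 ∧ Integrable id μ ∧ 0 < mMean μ

/-- The cumulative distribution function `F_μ(x) = μ([0,x])`. -/
def cdfR (μ : Measure ℝ) (x : ℝ) : ℝ := (μ (Set.Icc 0 x)).toReal

/-- The quantile function `Q_μ(p) = inf {x ∈ ℝ₊ : F_μ(x) ≥ p}`. -/
def quant (μ : Measure ℝ) (p : ℝ) : ℝ := sInf {x : ℝ | 0 ≤ x ∧ p ≤ cdfR μ x}

/-- The Lorenz function `L_μ(p) = (∫_0^p Q_μ(t) dt) / m_μ`. -/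
def lorenz (μ : Measure ℝ) (p : ℝ) : ℝ := (∫ t in (0:ℝ)..p, quant μ t) / mMean μ

/-- The pseudo-Lorenz function `Λ_μ(p) = (∫_{[0,Q_μ(p)]} u dμ(u)) / m_μ` for `p ∈ [0,1)`,
with `Λ_μ(1) = 1`. -/
def pseudoLorenz (μ : Measure ℝ) (p : ℝ) : ℝ :=
  if p = 1 then 1 else (∫ u in Set.Icc (0:ℝ) (quant μ p), u ∂μ) / mMean μ

/-- The Gini coefficient `G(μ) = (∫∫ |x-y| d(μ⊗μ)) / (2 m_μ)`. -/
def gini (μ : Measure ℝ) : ℝ := (∫ z : ℝ × ℝ, |z.1 - z.2| ∂(μ.prod μ)) / (2 * mMean μ)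

/-- The Hoover coefficient `H(μ) = (∫ |x - m_μ| dμ) / (2 m_μ)`. -/
def hoover (μ : Measure ℝ) : ℝ := (∫ x, |x - mMean μ| ∂μ) / (2 * mMean μ)

/-- The Wasserstein-1 distance `W₁(μ,ν) = ∫_0^1 |Q_μ - Q_ν|`. -/
def W1 (μ ν : Measure ℝ) : ℝ := ∫ t in (0:ℝ)..1, |quant μ t - quant ν t|

/-- Weak convergence of a sequence of measures: convergence of integrals of all bounded
continuous functions. -/
def WeakCv (μs : ℕ → Measure ℝ) (ν : Measure ℝ) : Prop :=
  ∀ f : ℝ → ℝ, Continuous f → (∃ C : ℝ, ∀ x, |f x| ≤ C) →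
    Tendsto (fun n => ∫ x, f x ∂(μs n)) atTop (𝓝 (∫ x, f x ∂ν))

/-- Uniform integrability of a family of measures on `ℝ₊`:
`sup_i ∫_{(α,∞)} x dμ_i(x) → 0` as `α → +∞`. -/
def UnifInt {ι : Type*} (μs : ι → Measure ℝ) : Prop :=
  ∀ ε > (0:ℝ), ∃ A : ℝ, ∀ α ≥ A, ∀ i, (∫ x in Set.Ioi α, x ∂(μs i)) ≤ ε

end

/-!
The quantile function `Q` pushes Lebesgue measure on `(0,1)` forward to `μ`, so
`∫_{[0,Q(p)]} u dμ = ∫_0^{F(Q(p))} Q`. Since `Q` is constant, equal to `Q(p)`, on `(p, F(Q(p)))`,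
this gives `Λ(p) - L(p) = Q(p) (F(Q(p)) - p) / m`, which is nonnegative and vanishes exactly when
`Q(p) = 0` or `F(Q(p)) = p`; the latter says that `p` is a value of `F` on `ℝ₊`.
-/

open Set ProbabilityTheory

theorem Iic_inter_Ioo_ae_eq_Ioc {c : ℝ} (hc : c ≤ 1) :
    (Iic c ∩ Ioo 0 1 : Set ℝ) =ᵐ[volume] Ioc 0 c := by
  have : Iic c ∩ Ioo 0 1 = Ioc 0 c \ {1} := by
    ext t
    simp only [mem_inter_iff, mem_Iic, mem_Ioo, Set.mem_sdiff, mem_Ioc, mem_singleton_iff]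
    constructor
    · rintro ⟨htc, ht0, ht1⟩
      exact ⟨⟨ht0, htc⟩, ht1.ne⟩
    · rintro ⟨⟨ht0, htc⟩, ht1⟩
      exact ⟨htc, ht0, lt_of_le_of_ne (htc.trans hc) ht1⟩
  rw [this]
  exact sdiff_null_ae_eq_self (measure_singleton 1)

section Quantile

variable {μ : Measure ℝ} {p : ℝ}

theorem cdfR_nonneg (x : ℝ) : 0 ≤ cdfR μ x := ENNReal.toReal_nonneg

theorem cdfR_of_neg {x : ℝ} (hx : x < 0) : cdfR μ x = 0 := by
  simp [cdfR, Icc_eq_empty_of_lt hx]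

theorem quant_nonneg : 0 ≤ quant μ p :=
  Real.sInf_nonneg fun _ hx => hx.1

theorem quant_le_of_le_cdfR {x : ℝ} (hx0 : 0 ≤ x) (hx : p ≤ cdfR μ x) : quant μ p ≤ x :=
  csInf_le ⟨0, fun _ hy => hy.1⟩ ⟨hx0, hx⟩

variable [IsProbabilityMeasure μ] (hμ : μ (Iio 0) = 0)
include hμ

theorem cdfR_eq_cdf : cdfR μ = cdf μ := by
  funext x
  rw [cdf_eq_real, cdfR, measureReal_def]
  congr 1
  refine le_antisymm (measure_mono Icc_subset_Iic_self) ?_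
  calc μ (Iic x) ≤ μ (Icc 0 x ∪ Iio 0) :=
        measure_mono fun y hy => (le_or_gt 0 y).imp (fun h => ⟨h, hy⟩) id
    _ ≤ μ (Icc 0 x) + μ (Iio 0) := measure_union_le _ _
    _ = μ (Icc 0 x) := by rw [hμ, add_zero]

theorem cdfR_mono : Monotone (cdfR μ) := by
  rw [cdfR_eq_cdf hμ]
  exact monotone_cdf μ

theorem cdfR_le_one (x : ℝ) : cdfR μ x ≤ 1 := by
  rw [cdfR_eq_cdf hμ]
  exact cdf_le_one μ x

theorem le_cdfR_quant (hp : p < 1) : p ≤ cdfR μ (quant μ p) := by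
  rw [cdfR_eq_cdf hμ]
  have hne : {x : ℝ | 0 ≤ x ∧ p ≤ cdfR μ x}.Nonempty := by
    obtain ⟨x, hpx, hx0⟩ := (((tendsto_cdf_atTop μ).eventually (eventually_ge_nhds hp)).and
      (eventually_ge_atTop 0)).exists
    exact ⟨x, hx0, by rwa [cdfR_eq_cdf hμ]⟩
  have hright : Tendsto (cdf μ) (𝓝[>] quant μ p) (𝓝 (cdf μ (quant μ p))) :=
    ((cdf μ).right_continuous _).mono Ioi_subset_Ici_self
  refine ge_of_tendsto hright (eventually_nhdsWithin_of_forall fun y hy => ?_)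
  obtain ⟨x, ⟨-, hpx⟩, hxy⟩ := exists_lt_of_csInf_lt hne hy
  rw [cdfR_eq_cdf hμ] at hpx
  exact hpx.trans (monotone_cdf μ hxy.le)

theorem quant_le_iff_le_cdfR {t : ℝ} (ht0 : 0 < t) (ht1 : t < 1) (a : ℝ) :
    quant μ t ≤ a ↔ t ≤ cdfR μ a := by
  rcases lt_or_ge a 0 with ha | ha
  · rw [cdfR_of_neg ha]
    exact iff_of_false (ha.trans_le quant_nonneg).not_ge ht0.not_ge
  · exact ⟨fun h => (le_cdfR_quant hμ ht1).trans (cdfR_mono hμ h), quant_le_of_le_cdfR ha⟩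

theorem monotoneOn_quant : MonotoneOn (quant μ) (Iio 1) := fun _ _ _ hq hst =>
  quant_le_of_le_cdfR quant_nonneg (hst.trans (le_cdfR_quant hμ hq))

theorem aemeasurable_quant : AEMeasurable (quant μ) (volume.restrict (Ioo 0 1)) :=
  aemeasurable_restrict_of_monotoneOn measurableSet_Ioo
    ((monotoneOn_quant hμ).mono Ioo_subset_Iio_self)

theorem preimage_quant_Iic_inter_Ioo (a : ℝ) :
    quant μ ⁻¹' Iic a ∩ Ioo 0 1 = Iic (cdfR μ a) ∩ Ioo 0 1 := by
  ext t
  simp only [mem_inter_iff, mem_preimage, mem_Iic]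
  exact and_congr_left fun ht => quant_le_iff_le_cdfR hμ ht.1 ht.2 a

theorem map_quant_volume : (volume.restrict (Ioo 0 1)).map (quant μ) = μ := by
  refine Measure.ext_of_Iic _ μ fun a => ?_
  rw [Measure.map_apply_of_aemeasurable (aemeasurable_quant hμ) measurableSet_Iic,
    Measure.restrict_apply' measurableSet_Ioo, preimage_quant_Iic_inter_Ioo hμ,
    measure_congr (Iic_inter_Ioo_ae_eq_Ioc (cdfR_le_one hμ a)), Real.volume_Ioc, sub_zero,
    cdfR_eq_cdf hμ, ofReal_cdf]

end Quantile

section Integrals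

variable {μ : Measure ℝ} [IsProbabilityMeasure μ] (hμ : μ (Iio 0) = 0) {p : ℝ}
include hμ

theorem setIntegral_Icc_eq_intervalIntegral_quant (b : ℝ) :
    ∫ u in Icc 0 b, u ∂μ = ∫ t in 0..cdfR μ b, quant μ t := by
  have hpre : quant μ ⁻¹' Icc 0 b = quant μ ⁻¹' Iic b := by
    ext t
    simp [quant_nonneg]
  conv_lhs => rw [← map_quant_volume hμ]
  rw [setIntegral_map measurableSet_Icc measurable_id'.aestronglyMeasurable
      (aemeasurable_quant hμ),
    Measure.restrict_restrict' measurableSet_Ioo, hpre, preimage_quant_Iic_inter_Ioo hμ,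
    setIntegral_congr_set (Iic_inter_Ioo_ae_eq_Ioc (cdfR_le_one hμ b)),
    intervalIntegral.integral_of_le (cdfR_nonneg b)]

theorem integral_quant_eq_mMean : ∫ t in 0..1, quant μ t = mMean μ := by
  rw [intervalIntegral.integral_of_le zero_le_one, ← setIntegral_congr_set Ioo_ae_eq_Ioc, mMean,
    ← integral_map (aemeasurable_quant hμ) measurable_id'.aestronglyMeasurable,
    map_quant_volume hμ]

theorem integrableOn_quant (hint : Integrable id μ) : IntegrableOn (quant μ) (Ioc 0 1) := by
  rw [← map_quant_volume hμ, integrable_map_measure aestronglyMeasurable_id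
    (aemeasurable_quant hμ)] at hint
  rw [IntegrableOn, ← Measure.restrict_congr_set Ioo_ae_eq_Ioc]
  exact hint

theorem quant_eq_of_mem_Ioo {t : ℝ} (ht : t ∈ Ioo p (cdfR μ (quant μ p))) :
    quant μ t = quant μ p := by
  have ht1 : t < 1 := ht.2.trans_le (cdfR_le_one hμ _)
  exact le_antisymm (quant_le_of_le_cdfR quant_nonneg ht.2.le)
    (quant_le_of_le_cdfR quant_nonneg (ht.1.le.trans (le_cdfR_quant hμ ht1)))

theorem intervalIntegral_quant_of_le_cdfR_quant (hp : p < 1) :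
    ∫ t in p..cdfR μ (quant μ p), quant μ t = quant μ p * (cdfR μ (quant μ p) - p) := by
  have hpc := le_cdfR_quant hμ hp
  rw [intervalIntegral.integral_of_le hpc, ← setIntegral_congr_set Ioo_ae_eq_Ioc,
    setIntegral_congr_fun measurableSet_Ioo fun t ht => quant_eq_of_mem_Ioo hμ ht,
    setIntegral_const, Real.volume_real_Ioo_of_le hpc, smul_eq_mul, mul_comm]

theorem pseudoLorenz_eq_lorenz_add (hint : Integrable id μ) (hp0 : 0 ≤ p) (hp1 : p < 1) :
    pseudoLorenz μ p = lorenz μ p + quant μ p * (cdfR μ (quant μ p) - p) / mMean μ := by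
  have hII {a b : ℝ} (ha : 0 ≤ a) (hab : a ≤ b) (hb : b ≤ 1) :
      IntervalIntegrable (quant μ) volume a b := by
    rw [intervalIntegrable_iff_integrableOn_Ioc_of_le hab]
    exact (integrableOn_quant hμ hint).mono_set (Ioc_subset_Ioc ha hb)
  have hpc := le_cdfR_quant hμ hp1
  rw [pseudoLorenz, if_neg hp1.ne, setIntegral_Icc_eq_intervalIntegral_quant hμ, lorenz,
    ← intervalIntegral.integral_add_adjacent_intervals (hII le_rfl hp0 hp1.le)
      (hII hp0 hpc (cdfR_le_one hμ _)),
    intervalIntegral_quant_of_le_cdfR_quant hμ hp1, add_div]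

theorem cdfR_quant_eq_self_iff (hp : p < 1) :
    cdfR μ (quant μ p) = p ↔ ∃ x, 0 ≤ x ∧ p = cdfR μ x := by
  refine ⟨fun h => ⟨quant μ p, quant_nonneg, h.symm⟩, fun ⟨x, hx0, hpx⟩ => ?_⟩
  refine le_antisymm ?_ (le_cdfR_quant hμ hp)
  calc cdfR μ (quant μ p) ≤ cdfR μ x := cdfR_mono hμ (quant_le_of_le_cdfR hx0 hpx.le)
    _ = p := hpx.symm

end Integrals

theorem lorenz_one {μ : Measure ℝ} [IsProbabilityMeasure μ] (hμ : μ (Iio 0) = 0)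
    (hm : mMean μ ≠ 0) : lorenz μ 1 = 1 := by
  rw [lorenz, integral_quant_eq_mMean hμ, div_self hm]

/-- For every `μ ∈ 𝐌` and `p ∈ [0,1]`, `L_μ(p) ≤ Λ_μ(p)`, with equality
iff `p` is in the range of `F_μ` on `ℝ₊`, or `Q_μ(p) = 0`, or `p = 1`. -/
theorem lorenz_le_pseudoLorenz_and_eq_iff (μ : Measure ℝ) (hμ : MemM μ)
    (p : ℝ) (hp : p ∈ Set.Icc (0:ℝ) 1) :
    lorenz μ p ≤ pseudoLorenz μ p ∧
      (lorenz μ p = pseudoLorenz μ p ↔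
        (∃ x : ℝ, 0 ≤ x ∧ p = cdfR μ x) ∨ quant μ p = 0 ∨ p = 1) := by
  obtain ⟨_, hneg, hint, hm⟩ := hμ
  obtain ⟨hp0, hp1⟩ := hp
  rcases hp1.lt_or_eq with hp1 | rfl
  · have hgap : 0 ≤ quant μ p * (cdfR μ (quant μ p) - p) :=
      mul_nonneg quant_nonneg (sub_nonneg.2 (le_cdfR_quant hneg hp1))
    rw [pseudoLorenz_eq_lorenz_add hneg hint hp0 hp1, ← cdfR_quant_eq_self_iff hneg hp1,
      left_eq_add, div_eq_zero_iff, mul_eq_zero, sub_eq_zero]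
    refine ⟨le_add_of_nonneg_right (div_nonneg hgap hm.le), ?_⟩
    simp [hm.ne', hp1.ne, or_comm]
  · simp [pseudoLorenz, lorenz_one hneg hm.ne']
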